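/- arXiv:2604.03850 — 2 statements merged into one kernel-verified Lean document; each statement's English description precedes it below -/
import Mathlib

section
/- Monotonicity of the soft loss in temperature: for fixed real numbers d_1, …, d_K, the Boltzmann-weighted mean F(T) = Σ_k q_k(T) d_k is monotone nondecreasing on (0, ∞); i.e. if 0 < T₁ ≤ T₂ then F(T₁) ≤ F(T₂). Hence annealing the temperature downward can only decrease the competitive loss at fixed embeddings and prototypes. -/
/-- Boltzmann assignment weights `q_k(T) = exp(−d_k/T) / ∑_j exp(−d_j/T)`. -/
noncomputable def boltzmannWeight {K : ℕ} (d : Fin K → ℝ) (T : ℝ) (k : Fin K) : ℝ :=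
  Real.exp (-(d k) / T) / ∑ j, Real.exp (-(d j) / T)

/-- Boltzmann-weighted mean `F(T) = ∑ k, q_k(T) d_k`. -/
noncomputable def boltzmannMean {K : ℕ} (d : Fin K → ℝ) (T : ℝ) : ℝ :=
  ∑ k, boltzmannWeight d T k * d k

lemma boltzmannMean_eq {K : ℕ} (d : Fin K → ℝ) (T : ℝ) :
    boltzmannMean d T = (∑ k, Real.exp (-(d k) / T) * d k) / ∑ j, Real.exp (-(d j) / T) := by
  unfold boltzmannMean boltzmannWeight
  rw [Finset.sum_div]
  exact Finset.sum_congr rfl fun k _ => by ring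

/-- Monotonicity of the soft loss in temperature: for fixed
`d_1, …, d_K`, the Boltzmann-weighted mean `F(T) = ∑ k, q_k(T) d_k` is
monotone nondecreasing on `(0, ∞)`: if `0 < T₁ ≤ T₂` then `F(T₁) ≤ F(T₂)`. -/
theorem boltzmann_mean_monotone_in_temperature
    (K : ℕ) (hK : 1 ≤ K) (d : Fin K → ℝ) :
    ∀ T₁ T₂ : ℝ, 0 < T₁ → T₁ ≤ T₂ → boltzmannMean d T₁ ≤ boltzmannMean d T₂ := by
  intro T₁ T₂ hT₁ hT
  have hT₂ : 0 < T₂ := lt_of_lt_of_le hT₁ hT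
  set a : Fin K → ℝ := fun k => Real.exp (-(d k) / T₁) with ha
  set b : Fin K → ℝ := fun k => Real.exp (-(d k) / T₂) with hb
  have hA : 0 < ∑ j, a j := by
    apply Finset.sum_pos (fun j _ => Real.exp_pos _)
    exact Finset.univ_nonempty_iff.mpr ⟨⟨0, hK⟩⟩
  have hB : 0 < ∑ j, b j := by
    apply Finset.sum_pos (fun j _ => Real.exp_pos _)
    exact Finset.univ_nonempty_iff.mpr ⟨⟨0, hK⟩⟩
  rw [boltzmannMean_eq, boltzmannMean_eq, div_le_div_iff₀ hA hB]
  have hinv : 1 / T₂ ≤ 1 / T₁ := one_div_le_one_div_of_le hT₁ hT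
  -- key pointwise inequality
  have key : ∀ k j : Fin K, 0 ≤ (d k - d j) * (b k * a j - a k * b j) := by
    intro k j
    rcases le_total (d j) (d k) with h | h
    · apply mul_nonneg (by linarith)
      have h1 : (d k - d j) * (1 / T₂) ≤ (d k - d j) * (1 / T₁) :=
        mul_le_mul_of_nonneg_left hinv (sub_nonneg.mpr h)
      have h2 : -(d k) / T₁ + -(d j) / T₂ ≤ -(d k) / T₂ + -(d j) / T₁ := by
        have e1 : -(d k) / T₁ = -(d k) * (1 / T₁) := by ring
        have e2 : -(d j) / T₂ = -(d j) * (1 / T₂) := by ring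
        have e3 : -(d k) / T₂ = -(d k) * (1 / T₂) := by ring
        have e4 : -(d j) / T₁ = -(d j) * (1 / T₁) := by ring
        rw [e1, e2, e3, e4]; nlinarith [h1]
      have := Real.exp_le_exp.mpr h2
      rw [Real.exp_add, Real.exp_add] at this
      simp only [ha, hb]
      nlinarith [Real.exp_pos (-(d k)/T₁), Real.exp_pos (-(d j)/T₂)]
    · have h1 : (d j - d k) * (1 / T₂) ≤ (d j - d k) * (1 / T₁) :=
        mul_le_mul_of_nonneg_left hinv (sub_nonneg.mpr h)
      have h2 : -(d k) / T₂ + -(d j) / T₁ ≤ -(d k) / T₁ + -(d j) / T₂ := by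
        have e1 : -(d k) / T₁ = -(d k) * (1 / T₁) := by ring
        have e2 : -(d j) / T₂ = -(d j) * (1 / T₂) := by ring
        have e3 : -(d k) / T₂ = -(d k) * (1 / T₂) := by ring
        have e4 : -(d j) / T₁ = -(d j) * (1 / T₁) := by ring
        rw [e1, e2, e3, e4]; nlinarith [h1]
      have hexp := Real.exp_le_exp.mpr h2
      rw [Real.exp_add, Real.exp_add] at hexp
      simp only [ha, hb]
      nlinarith [hexp, Real.exp_pos (-(d k)/T₂), Real.exp_pos (-(d j)/T₁)]
  have hsum : 0 ≤ ∑ k, ∑ j, (d k - d j) * (b k * a j - a k * b j) :=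
    Finset.sum_nonneg fun k _ => Finset.sum_nonneg fun j _ => key k j
  have hexpand : ∑ k, ∑ j, (d k - d j) * (b k * a j - a k * b j) =
      2 * ((∑ k, b k * d k) * (∑ j, a j) - (∑ k, a k * d k) * (∑ j, b j)) := by
    have e : ∀ k j : Fin K, (d k - d j) * (b k * a j - a k * b j) =
        (d k * b k) * a j - (d k * a k) * b j - (d j * a j) * b k + (d j * b j) * a k := by
      intro k j; ring
    simp only [e, Finset.sum_add_distrib, Finset.sum_sub_distrib,
      ← Finset.mul_sum, ← Finset.sum_mul]
    have c1 : ∑ k, b k * d k = ∑ k, d k * b k :=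
      Finset.sum_congr rfl fun k _ => mul_comm _ _
    have c2 : ∑ k, a k * d k = ∑ k, d k * a k :=
      Finset.sum_congr rfl fun k _ => mul_comm _ _
    rw [c1, c2]; ring_nf
  rw [hexpand] at hsum
  calc (∑ k, a k * d k) * ∑ j, b j ≤ (∑ k, b k * d k) * ∑ j, a j := by linarith
    _ = _ := by ring
end

section
/- Anti-collapse along the free-energy gradient flow (conclusion of Theorem 2): let λ > 0, K ≥ 2, and let W(θ, P) = L_q(θ, P) + (λ/2) Σ_{j ≠ k} ‖p_j − p_k‖^{-2} with L_q(θ, P) ≥ 0 for all (θ, P). Let (θ(t), P(t)), t ≥ 0, be a differentiable solution of the gradient flow θ' = −η_θ ∇_θ W, P' = −η_P ∇_P W (η_θ, η_P > 0) whose initial prototypes p_1(0), …, p_K(0) are pairwise distinct, and set W₀ = W(θ(0), P(0)). Then for all t ≥ 0 in the interval of existence, the prototypes remain pairwise distinct with separation min_{j ≠ k} ‖p_j(t) − p_k(t)‖² ≥ λ / W₀; in particular the trajectory never reaches a prototype-collapse configuration. -/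
/-! Along the gradient flow the free energy `W` is nonincreasing, and the barrier term alone gives
`W ≥ λ ‖p_j - p_k‖⁻²` for every pair `j ≠ k`, so `‖p_j(t) - p_k(t)‖² ≥ λ / W₀` as long as the two
prototypes are distinct. Hence the continuous separation `t ↦ ‖p_j(t) - p_k(t)‖²` never takes a
value in `(0, λ / W₀)`; starting at or above `λ / W₀`, it can never reach `0` either. The
continuity argument is needed because at a collapse the barrier term is `0⁻¹ = 0` in Lean, so the
energy bound alone does not exclude `p_j(t) = p_k(t)`. -/

open Set Finset

section GradientFlow

variable {E F : Type*} [NormedAddCommGroup E] [InnerProductSpace ℝ E]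
  [NormedAddCommGroup F] [InnerProductSpace ℝ F]
  {W : E × F → ℝ} {θ : ℝ → E} {P : ℝ → F} {ηθ ηP : ℝ}

theorem hasDerivAt_comp_of_gradientFlow {gθ : E} {gP : F} {t : ℝ}
    (hW : HasFDerivAt W ((innerSL ℝ gθ).comp (ContinuousLinearMap.fst ℝ E F)
      + (innerSL ℝ gP).comp (ContinuousLinearMap.snd ℝ E F)) (θ t, P t))
    (hθ : HasDerivAt θ (-ηθ • gθ) t) (hP : HasDerivAt P (-ηP • gP) t) :
    HasDerivAt (fun s => W (θ s, P s)) (-(ηθ * ‖gθ‖ ^ 2 + ηP * ‖gP‖ ^ 2)) t := by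
  refine (hW.comp_hasDerivAt t (hθ.prodMk hP)).congr_deriv ?_
  simp only [add_apply, ContinuousLinearMap.comp_apply,
    ContinuousLinearMap.coe_fst', ContinuousLinearMap.coe_snd', innerSL_apply_apply,
    real_inner_smul_right, real_inner_self_eq_norm_sq]
  ring

theorem antitoneOn_comp_of_gradientFlow {D : Set ℝ} (hD : Convex ℝ D) (hηθ : 0 ≤ ηθ)
    (hηP : 0 ≤ ηP) {gθ : ℝ → E} {gP : ℝ → F}
    (hW : ∀ t ∈ D, HasFDerivAt W ((innerSL ℝ (gθ t)).comp (ContinuousLinearMap.fst ℝ E F)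
      + (innerSL ℝ (gP t)).comp (ContinuousLinearMap.snd ℝ E F)) (θ t, P t))
    (hθ : ∀ t ∈ D, HasDerivAt θ (-ηθ • gθ t) t) (hP : ∀ t ∈ D, HasDerivAt P (-ηP • gP t) t) :
    AntitoneOn (fun t => W (θ t, P t)) D := by
  have hderiv : ∀ t ∈ D, HasDerivAt (fun s => W (θ s, P s))
      (-(ηθ * ‖gθ t‖ ^ 2 + ηP * ‖gP t‖ ^ 2)) t := fun t ht =>
    hasDerivAt_comp_of_gradientFlow (hW t ht) (hθ t ht) (hP t ht)
  refine antitoneOn_of_hasDerivWithinAt_nonpos hD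
    (fun t ht => (hderiv t ht).continuousAt.continuousWithinAt)
    (fun t ht => (hderiv t (interior_subset ht)).hasDerivWithinAt) fun t _ => ?_
  have := mul_nonneg hηθ (sq_nonneg ‖gθ t‖)
  have := mul_nonneg hηP (sq_nonneg ‖gP t‖)
  linarith

end GradientFlow

section Repulsion

variable {ι E : Type*} [Fintype ι] [DecidableEq ι] [NormedAddCommGroup E]

noncomputable def pairwiseRepulsion (p : ι → E) : ℝ :=
  ∑ jk ∈ univ.filter (fun jk : ι × ι => jk.1 ≠ jk.2), (‖p jk.1 - p jk.2‖ ^ 2)⁻¹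

theorem two_mul_inv_sq_norm_sub_le_pairwiseRepulsion (p : ι → E) {j k : ι} (hjk : j ≠ k) :
    2 * (‖p j - p k‖ ^ 2)⁻¹ ≤ pairwiseRepulsion p := by
  have hsub : {(j, k), (k, j)} ⊆ univ.filter (fun jk : ι × ι => jk.1 ≠ jk.2) := by
    simp [Finset.insert_subset_iff, hjk, hjk.symm]
  calc 2 * (‖p j - p k‖ ^ 2)⁻¹
      = ∑ jk ∈ {(j, k), (k, j)}, (‖p jk.1 - p jk.2‖ ^ 2)⁻¹ := by
        rw [Finset.sum_pair (by simp [hjk]), norm_sub_rev (p k)]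
        ring
    _ ≤ pairwiseRepulsion p :=
        Finset.sum_le_sum_of_subset_of_nonneg hsub fun _ _ _ => by positivity

theorem div_sq_norm_sub_le_add_pairwiseRepulsion (p : ι → E) {j k : ι} (hjk : j ≠ k)
    {L lam : ℝ} (hL : 0 ≤ L) (hlam : 0 ≤ lam) :
    lam / ‖p j - p k‖ ^ 2 ≤ L + lam / 2 * pairwiseRepulsion p :=
  calc lam / ‖p j - p k‖ ^ 2 = lam / 2 * (2 * (‖p j - p k‖ ^ 2)⁻¹) := by ring
    _ ≤ lam / 2 * pairwiseRepulsion p := by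
      gcongr; exact two_mul_inv_sq_norm_sub_le_pairwiseRepulsion p hjk
    _ ≤ L + lam / 2 * pairwiseRepulsion p := le_add_of_nonneg_left hL

end Repulsion

theorem IsPreconnected.forall_le_of_forall_notMem_Ioo {X : Type*} [TopologicalSpace X]
    {s : Set X} {g : X → ℝ} {b c : ℝ} {x₀ : X} (hs : IsPreconnected s) (hg : ContinuousOn g s)
    (hbc : b < c) (hx₀ : x₀ ∈ s) (h₀ : c ≤ g x₀) (hgap : ∀ x ∈ s, g x ∉ Ioo b c) :
    ∀ x ∈ s, c ≤ g x := by
  intro x hx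
  by_contra! hlt
  have hle : g x ≤ b := by
    by_contra! hgt
    exact hgap x hx ⟨hgt, hlt⟩
  obtain ⟨y, hy, hmid⟩ : (b + c) / 2 ∈ g '' s :=
    hs.intermediate_value hx hx₀ hg ⟨by linarith, by linarith⟩
  exact hgap y hy ⟨by linarith, by linarith⟩

set_option maxHeartbeats 40000000 in
set_option synthInstance.maxHeartbeats 4000000 in
theorem ddcl_free_energy_anti_collapse_general
    (a m K : ℕ) (lam : ℝ) (hlam : 0 < lam)
    (Lq : EuclideanSpace ℝ (Fin a) × PiLp 2 (fun _ : Fin K => EuclideanSpace ℝ (Fin m)) → ℝ)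
    (hLq : ∀ u, 0 ≤ Lq u)
    (W : EuclideanSpace ℝ (Fin a) × PiLp 2 (fun _ : Fin K => EuclideanSpace ℝ (Fin m)) → ℝ)
    (hWdef : ∀ u, W u = Lq u + (lam / 2) *
      ∑ jk ∈ Finset.univ.filter (fun jk : Fin K × Fin K => jk.1 ≠ jk.2),
        (‖u.2 jk.1 - u.2 jk.2‖ ^ 2)⁻¹)
    (ηθ ηP : ℝ) (hηθ : 0 < ηθ) (hηP : 0 < ηP)
    (θ : ℝ → EuclideanSpace ℝ (Fin a))
    (P : ℝ → PiLp 2 (fun _ : Fin K => EuclideanSpace ℝ (Fin m)))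
    (gθ : ℝ → EuclideanSpace ℝ (Fin a))
    (gP : ℝ → PiLp 2 (fun _ : Fin K => EuclideanSpace ℝ (Fin m)))
    (hW : ∀ t, 0 ≤ t → HasFDerivAt W
      ((innerSL ℝ (gθ t)).comp
          (ContinuousLinearMap.fst ℝ (EuclideanSpace ℝ (Fin a))
            (PiLp 2 (fun _ : Fin K => EuclideanSpace ℝ (Fin m))))
        + (innerSL ℝ (gP t)).comp
          (ContinuousLinearMap.snd ℝ (EuclideanSpace ℝ (Fin a))
            (PiLp 2 (fun _ : Fin K => EuclideanSpace ℝ (Fin m)))))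
      (θ t, P t))
    (hθ : ∀ t, 0 ≤ t → HasDerivAt θ (-ηθ • gθ t) t)
    (hP : ∀ t, 0 ≤ t → HasDerivAt P (-ηP • gP t) t)
    (hinit : ∀ j k : Fin K, j ≠ k → P 0 j ≠ P 0 k) :
    ∀ t, 0 ≤ t → ∀ j k : Fin K, j ≠ k →
      P t j ≠ P t k ∧ lam / W (θ 0, P 0) ≤ ‖P t j - P t k‖ ^ 2 := by
  intro t ht j k hjk
  set g : ℝ → ℝ := fun s => ‖P s j - P s k‖ ^ 2
  have hbarrier : ∀ s, lam / g s ≤ W (θ s, P s) := fun s =>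
    (hWdef _).symm ▸ div_sq_norm_sub_le_add_pairwiseRepulsion (P s ·) hjk (hLq _) hlam.le
  have hdecay : ∀ s, 0 ≤ s → W (θ s, P s) ≤ W (θ 0, P 0) := fun s hs =>
    antitoneOn_comp_of_gradientFlow (convex_Ici 0) hηθ.le hηP.le hW hθ hP
      self_mem_Ici hs hs
  have hg0 : 0 < g 0 :=
    pow_pos (norm_pos_iff.2 (sub_ne_zero.2 (hinit j k hjk))) 2
  have hW₀ : 0 < W (θ 0, P 0) := (div_pos hlam hg0).trans_le (hbarrier 0)
  have hc : 0 < lam / W (θ 0, P 0) := div_pos hlam hW₀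
  have hsep : ∀ s, 0 ≤ s → 0 < g s → lam / W (θ 0, P 0) ≤ g s := fun s hs hgs =>
    (div_le_comm₀ hgs hW₀).1 ((hbarrier s).trans (hdecay s hs))
  have hg_cont : ContinuousOn g (Ici 0) := fun s hs =>
    have := (hP s hs).continuousAt
    ContinuousAt.continuousWithinAt (by fun_prop)
  have hgt : lam / W (θ 0, P 0) ≤ g t :=
    isPreconnected_Ici.forall_le_of_forall_notMem_Ioo hg_cont hc self_mem_Ici
      (hsep 0 le_rfl hg0) (fun s hs hgs => (hsep s hs hgs.1).not_gt hgs.2) t ht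
  refine ⟨fun hPt => ?_, hgt⟩
  have hgt_zero : g t = 0 := by simp [g, hPt]
  linarith

set_option maxHeartbeats 40000000 in
set_option synthInstance.maxHeartbeats 4000000 in
/-- Anti-collapse along the free-energy gradient flow: let
`λ > 0`, `K ≥ 2`, and `W(θ, P) = L_q(θ, P) + (λ/2) ∑_{j ≠ k} ‖p_j − p_k‖⁻²`
with `L_q ≥ 0`. Let `(θ t, P t)`, `t ≥ 0`, solve the two-rate gradient flow
`θ' = −ηθ ∇_θ W`, `P' = −ηP ∇_P W` (the Fréchet derivative of `W` at
`(θ t, P t)` being the pairing with the partial gradients `(gθ t, gP t)`),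
with pairwise distinct initial prototypes, and set `W₀ = W (θ 0, P 0)`.
Then for all `t ≥ 0` the prototypes remain pairwise distinct with separation
`‖p_j(t) − p_k(t)‖² ≥ λ / W₀`: the trajectory never reaches a
prototype-collapse configuration. -/
theorem ddcl_free_energy_anti_collapse
    (a m K : ℕ) (hK : 2 ≤ K) (lam : ℝ) (hlam : 0 < lam)
    (Lq : EuclideanSpace ℝ (Fin a) × PiLp 2 (fun _ : Fin K => EuclideanSpace ℝ (Fin m)) → ℝ)
    (hLq : ∀ u, 0 ≤ Lq u)
    (W : EuclideanSpace ℝ (Fin a) × PiLp 2 (fun _ : Fin K => EuclideanSpace ℝ (Fin m)) → ℝ)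
    (hWdef : ∀ u, W u = Lq u + (lam / 2) *
      ∑ jk ∈ Finset.univ.filter (fun jk : Fin K × Fin K => jk.1 ≠ jk.2),
        (‖u.2 jk.1 - u.2 jk.2‖ ^ 2)⁻¹)
    (ηθ ηP : ℝ) (hηθ : 0 < ηθ) (hηP : 0 < ηP)
    (θ : ℝ → EuclideanSpace ℝ (Fin a))
    (P : ℝ → PiLp 2 (fun _ : Fin K => EuclideanSpace ℝ (Fin m)))
    (gθ : ℝ → EuclideanSpace ℝ (Fin a))
    (gP : ℝ → PiLp 2 (fun _ : Fin K => EuclideanSpace ℝ (Fin m)))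
    (hW : ∀ t, 0 ≤ t → HasFDerivAt W
      ((innerSL ℝ (gθ t)).comp
          (ContinuousLinearMap.fst ℝ (EuclideanSpace ℝ (Fin a))
            (PiLp 2 (fun _ : Fin K => EuclideanSpace ℝ (Fin m))))
        + (innerSL ℝ (gP t)).comp
          (ContinuousLinearMap.snd ℝ (EuclideanSpace ℝ (Fin a))
            (PiLp 2 (fun _ : Fin K => EuclideanSpace ℝ (Fin m)))))
      (θ t, P t))
    (hθ : ∀ t, 0 ≤ t → HasDerivAt θ (-ηθ • gθ t) t)
    (hP : ∀ t, 0 ≤ t → HasDerivAt P (-ηP • gP t) t)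
    (hinit : ∀ j k : Fin K, j ≠ k → P 0 j ≠ P 0 k) :
    ∀ t, 0 ≤ t → ∀ j k : Fin K, j ≠ k →
      P t j ≠ P t k ∧ lam / W (θ 0, P 0) ≤ ‖P t j - P t k‖ ^ 2 :=
  ddcl_free_energy_anti_collapse_general a m K lam hlam Lq hLq W hWdef ηθ ηP hηθ hηP θ P gθ gP hW hθ
    hP hinit
end
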